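/- arXiv:2211.09326 — 2 statements merged into one kernel-verified Lean document; each statement's English description precedes it below -/
import Mathlib

section
/- Let Z ∈ ℝ^{p×q} be such that ZᵀZ is invertible, and let A, B ∈ ℝ^{q×q} be fixed matrices with B symmetric. Then the divergence of the matrix field Z ↦ Z(ZᵀZ)^{-1}A(ZᵀZ)^{-1}B satisfies Σ_{i=1}^p Σ_{j=1}^q ∂/∂Z_{ij} (Z(ZᵀZ)^{-1}A(ZᵀZ)^{-1}B)_{ij} = (p−q−2)·tr((ZᵀZ)^{-1}A(ZᵀZ)^{-1}B) − tr(A(ZᵀZ)^{-1})·tr((ZᵀZ)^{-1}B). -/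
/-!
Along the line `Z + tV` the Gram inverse `W = (ZᵀZ)⁻¹` moves with velocity `-W (VᵀZ + ZᵀV) W`, so the
directional derivative of the field is a sum of terms `P V Q` and `P Vᵀ Q`. Summing the `(i, j)`
entry over `V = Eᵢⱼ` turns these into `tr P · tr Q` and `tr (Pᵀ Q)`; then `W ZᵀZ = 1` gives
`tr (Z W Zᵀ) = q`, and the symmetry of `W` and `B` identifies the two `Vᵀ`-terms with `tr (W A W B)`.
-/

open Matrix

section Algebra

variable {m n R : Type*} [Fintype m] [Fintype n] [DecidableEq m] [DecidableEq n] [CommRing R]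

theorem Matrix.sum_mul_single_mul_apply (P : Matrix m m R) (Q : Matrix n n R) :
    ∑ i : m, ∑ j : n, (P * single i j (1 : R) * Q) i j = trace P * trace Q := by
  simp [Matrix.mul_apply, Matrix.single, trace, Finset.sum_mul_sum, ite_and]

theorem Matrix.sum_mul_transpose_single_mul_apply (P Q : Matrix m n R) :
    ∑ i : m, ∑ j : n, (P * (single i j (1 : R))ᵀ * Q) i j = trace (Pᵀ * Q) := by
  rw [trace, Finset.sum_comm]
  simp [Matrix.mul_apply, Matrix.single, ite_and]

/-- The derivative along `V` of `Z ↦ Z (ZᵀZ)⁻¹ A (ZᵀZ)⁻¹ B`, with `W` standing for `(ZᵀZ)⁻¹`. -/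
def gramFieldDeriv (Z V : Matrix m n R) (W A B : Matrix n n R) : Matrix m n R :=
  V * (W * A * W * B)
    + Z * (-(W * (Vᵀ * Z + Zᵀ * V) * W) * A * W * B + W * A * -(W * (Vᵀ * Z + Zᵀ * V) * W) * B)

omit [DecidableEq n] in
theorem gramFieldDeriv_eq (Z V : Matrix m n R) (W A B : Matrix n n R) :
    gramFieldDeriv Z V W A B
      = (1 : Matrix m m R) * V * (W * A * W * B) - Z * W * Vᵀ * (Z * (W * A * W * B))
        - Z * W * Zᵀ * V * (W * A * W * B) - Z * W * A * W * Vᵀ * (Z * W * B)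
        - Z * W * A * W * Zᵀ * V * (W * B) := by
  rw [gramFieldDeriv, Matrix.one_mul]
  simp only [Matrix.mul_add, Matrix.add_mul, Matrix.neg_mul, Matrix.mul_neg, Matrix.mul_assoc,
    sub_eq_add_neg]
  abel

theorem sum_gramFieldDeriv_single_apply (Z : Matrix m n R) (W A B : Matrix n n R)
    (hWG : W * (Zᵀ * Z) = 1) (hB : Bᵀ = B) :
    ∑ i : m, ∑ j : n, gramFieldDeriv Z (single i j 1) W A B i j
      = ((Fintype.card m : R) - Fintype.card n - 2) * trace (W * A * W * B)
        - trace (A * W) * trace (W * B) := by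
  have hGW : Zᵀ * Z * W = 1 := mul_eq_one_comm.mp hWG
  have hWt : Wᵀ = W := by
    rw [← inv_eq_left_inv hWG, transpose_nonsing_inv, transpose_mul, transpose_transpose]
  simp only [gramFieldDeriv_eq, Matrix.sub_apply, Finset.sum_sub_distrib,
    sum_mul_single_mul_apply, sum_mul_transpose_single_mul_apply]
  set N := W * A * W * B with hN
  have htrace_ZW : trace ((Z * W)ᵀ * (Z * N)) = trace N := by
    rw [transpose_mul, hWt, Matrix.mul_assoc, ← Matrix.mul_assoc Zᵀ, ← Matrix.mul_assoc W, hWG,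
      Matrix.one_mul]
  have htrace_ZWZt : trace (Z * W * Zᵀ) = Fintype.card n := by
    rw [trace_mul_comm, ← Matrix.mul_assoc, hGW, trace_one]
  have htrace_ZWAW : trace ((Z * W * A * W)ᵀ * (Z * W * B)) = trace N := by
    rw [← trace_transpose]
    simp only [transpose_mul, transpose_transpose, hWt, hB, Matrix.mul_assoc]
    rw [← Matrix.mul_assoc Zᵀ Z, ← Matrix.mul_assoc W (Zᵀ * Z), hWG, Matrix.one_mul,
      trace_mul_comm, hN]
    simp only [Matrix.mul_assoc]
  have htrace_ZWAWZt : trace (Z * W * A * W * Zᵀ) = trace (A * W) := by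
    rw [trace_mul_comm]
    simp only [← Matrix.mul_assoc, hGW, Matrix.one_mul]
  rw [htrace_ZW, htrace_ZWZt, htrace_ZWAW, htrace_ZWAWZt, trace_one]
  ring

end Algebra

section Calculus

attribute [local instance] Matrix.linftyOpNormedRing Matrix.linftyOpNormedAlgebra

variable {m n : Type*} [Fintype n] [DecidableEq n]

theorem HasDerivAt.matrix_inv {f : ℝ → Matrix n n ℝ} {f' : Matrix n n ℝ} {t : ℝ}
    (hf : HasDerivAt f f' t) (ht : IsUnit (f t).det) :
    HasDerivAt (fun s => (f s)⁻¹) (-((f t)⁻¹ * f' * (f t)⁻¹)) t := by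
  obtain ⟨u, hu⟩ := (isUnit_iff_isUnit_det _).mpr ht
  have hinv := hasFDerivAt_ringInverse (𝕜 := ℝ) u
  rw [coe_units_inv, hu] at hinv
  have h := hinv.comp_hasDerivAt t hf
  rw [show (fun s => (f s)⁻¹) = Ring.inverse ∘ f from funext fun s => nonsing_inv_eq_ringInverse _]
  exact h

theorem hasDerivAt_gram_add_smul [Fintype m] (Z V : Matrix m n ℝ) :
    HasDerivAt (fun t : ℝ => (Z + t • V)ᵀ * (Z + t • V)) (Vᵀ * Z + Zᵀ * V) 0 := by
  have hexpand : ∀ t : ℝ, (Z + t • V)ᵀ * (Z + t • V)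
      = Zᵀ * Z + t • (Vᵀ * Z + Zᵀ * V) + (t * t) • (Vᵀ * V) := by
    intro t
    rw [transpose_add, transpose_smul, Matrix.add_mul, Matrix.mul_add, Matrix.mul_add,
      Matrix.smul_mul, Matrix.smul_mul, Matrix.mul_smul, Matrix.mul_smul, smul_smul, smul_add]
    abel
  simp_rw [hexpand]
  have hlin := (hasDerivAt_id (0 : ℝ)).smul_const (Vᵀ * Z + Zᵀ * V)
  have hquad := ((hasDerivAt_id (0 : ℝ)).mul (hasDerivAt_id (0 : ℝ))).smul_const (Vᵀ * V)
  have h := ((hasDerivAt_const (0 : ℝ) (Zᵀ * Z)).add hlin).add hquad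
  simp only [id, one_smul, zero_add, mul_zero, zero_mul, add_zero, zero_smul] at h
  exact h

theorem hasDerivAt_add_smul_mul_apply (Z V : Matrix m n ℝ) {M : ℝ → Matrix n n ℝ}
    {M' : Matrix n n ℝ} (hM : HasDerivAt M M' 0) (i : m) (j : n) :
    HasDerivAt (fun t => ((Z + t • V) * M t) i j) ((V * M 0 + Z * M') i j) 0 := by
  have hrow : ∀ k, HasDerivAt (fun t : ℝ => (Z + t • V) i k) (V i k) 0 := fun k => by
    simpa using ((hasDerivAt_id (0 : ℝ)).mul_const (V i k)).const_add (Z i k)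
  have hentry : ∀ k, HasDerivAt (fun t => M t k j) (M' k j) 0 := fun k =>
    (entryLinearMap ℝ ℝ k j).toContinuousLinearMap.hasFDerivAt.comp_hasDerivAt 0 hM
  have hsum := HasDerivAt.fun_sum (u := Finset.univ) fun k _ => (hrow k).fun_mul (hentry k)
  simpa only [zero_smul, add_zero, mul_apply, Matrix.add_apply, Matrix.zero_apply,
    Finset.sum_add_distrib] using hsum

theorem hasDerivAt_gram_add_smul_inv [Fintype m] (Z V : Matrix m n ℝ) (hZ : IsUnit (Zᵀ * Z).det) :
    HasDerivAt (fun t : ℝ => ((Z + t • V)ᵀ * (Z + t • V))⁻¹)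
      (-((Zᵀ * Z)⁻¹ * (Vᵀ * Z + Zᵀ * V) * (Zᵀ * Z)⁻¹)) 0 := by
  have h := (hasDerivAt_gram_add_smul Z V).matrix_inv (by simpa using hZ)
  simpa only [zero_smul, add_zero] using h

theorem hasDerivAt_add_smul_mul_gram_inv_mul_apply [Fintype m] (Z V : Matrix m n ℝ)
    (hZ : IsUnit (Zᵀ * Z).det) (A B : Matrix n n ℝ) (i : m) (j : n) :
    HasDerivAt (fun t : ℝ => ((Z + t • V) * ((Z + t • V)ᵀ * (Z + t • V))⁻¹ * A
        * ((Z + t • V)ᵀ * (Z + t • V))⁻¹ * B) i j)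
      (gramFieldDeriv Z V (Zᵀ * Z)⁻¹ A B i j) 0 := by
  have hinv := hasDerivAt_gram_add_smul_inv Z V hZ
  have h := hasDerivAt_add_smul_mul_apply Z V (((hinv.mul_const A).fun_mul hinv).mul_const B) i j
  simp only [gramFieldDeriv, zero_smul, add_zero, Matrix.add_mul, Matrix.mul_assoc] at h ⊢
  exact h

end Calculus

/-- Divergence formula for the matrix field `Z ↦ Z(ZᵀZ)⁻¹A(ZᵀZ)⁻¹B` with `B` symmetric:
the sum over all entries `(i,j)` of the partial derivative of the `(i,j)` entry with
respect to `Zᵢⱼ` equals `(p-q-2) tr((ZᵀZ)⁻¹A(ZᵀZ)⁻¹B) - tr(A(ZᵀZ)⁻¹) tr((ZᵀZ)⁻¹B)`. -/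
theorem stmt_10 (p q : ℕ) (Z : Matrix (Fin p) (Fin q) ℝ) (hZ : IsUnit (Zᵀ * Z).det)
    (A B : Matrix (Fin q) (Fin q) ℝ) (hB : Bᵀ = B) :
    ∑ i : Fin p, ∑ j : Fin q,
        deriv (fun t : ℝ =>
          ((Z + t • Matrix.single i j (1 : ℝ))
              * (((Z + t • Matrix.single i j (1 : ℝ))ᵀ
                  * (Z + t • Matrix.single i j (1 : ℝ)))⁻¹)
              * A
              * (((Z + t • Matrix.single i j (1 : ℝ))ᵀ
                  * (Z + t • Matrix.single i j (1 : ℝ)))⁻¹)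
              * B) i j) 0
      = ((p : ℝ) - q - 2) * Matrix.trace ((Zᵀ * Z)⁻¹ * A * (Zᵀ * Z)⁻¹ * B)
        - Matrix.trace (A * (Zᵀ * Z)⁻¹) * Matrix.trace ((Zᵀ * Z)⁻¹ * B) := by
  simp only [fun i j => (hasDerivAt_add_smul_mul_gram_inv_mul_apply Z (single i j (1 : ℝ)) hZ A B
    i j).deriv]
  simpa using sum_gramFieldDeriv_single_apply Z _ A B (nonsing_inv_mul _ hZ) hB
end

section
/- Let p ≥ 2q+3 and c = 2(p−2q−2)/q. Then for every Z ∈ ℝ^{p×q} with ZᵀZ invertible, the quantity −4c(p−q−2)·tr((ZᵀZ)^{-2}) + (c² + 4c)·(tr((ZᵀZ)^{-1}))² is at most −(4(p−2q−2)²/q)·tr((ZᵀZ)^{-2}), and in particular is strictly negative. -/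
/-!
Put `A = (ZᵀZ)⁻¹`, `s = tr A²` and `t = tr A`. Since `A` is symmetric, `s = tr(AᵀA)` is the sum of
the squares of the entries of `A`, so `s > 0` and, by Cauchy–Schwarz on the diagonal, `t² ≤ q s`.
With `d = p - 2q - 2` we have `cq = 2d`, and the claimed bound is then the scalar estimate
`-4c(d + q)s + (c² + 4c)t² ≤ -4c(d + q)s + c(cq + 4q)s = -2cd s = -(4d²/q)s`.
-/

open Matrix

namespace Matrix

variable {n : Type*} [Fintype n]

theorem sq_trace_le_card_mul_trace_transpose_mul_self (A : Matrix n n ℝ) :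
    A.trace ^ 2 ≤ Fintype.card n * (Aᵀ * A).trace := by
  have h_diag : A.trace ^ 2 ≤ Fintype.card n * ∑ i, A i i ^ 2 :=
    sq_sum_le_card_mul_sum_sq
  have h_entries : ∑ i, A i i ^ 2 ≤ (Aᵀ * A).trace := by
    simp only [trace, diag, mul_apply, transpose_apply, ← sq]
    exact Finset.sum_le_sum fun i _ =>
      Finset.single_le_sum (f := fun j => A j i ^ 2) (fun j _ => sq_nonneg _) (Finset.mem_univ i)
  exact h_diag.trans (mul_le_mul_of_nonneg_left h_entries (Nat.cast_nonneg _))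

theorem trace_transpose_mul_self_pos {A : Matrix n n ℝ} (hA : A ≠ 0) : 0 < (Aᵀ * A).trace := by
  have h_nonneg : 0 ≤ (Aᵀ * A).trace := by
    simpa [conjTranspose_eq_transpose_of_trivial] using
      (posSemidef_conjTranspose_mul_self A).trace_nonneg
  have h_ne : (Aᵀ * A).trace ≠ 0 := by
    simpa [conjTranspose_eq_transpose_of_trivial] using
      (trace_conjTranspose_mul_self_eq_zero_iff (A := A)).not.mpr hA
  exact h_nonneg.lt_of_ne h_ne.symm

theorem IsSymm.sq_eq_transpose_mul_self [DecidableEq n] {A : Matrix n n ℝ} (hA : A.IsSymm) :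
    A ^ 2 = Aᵀ * A := by
  rw [hA.eq, sq]

end Matrix

theorem neg_four_mul_add_le_of_sq_le {p q c s t : ℝ} (hq : 0 < q) (hpq : 2 * q + 2 ≤ p)
    (hc : c = 2 * (p - 2 * q - 2) / q) (hts : t ^ 2 ≤ q * s) :
    -4 * c * (p - q - 2) * s + (c ^ 2 + 4 * c) * t ^ 2 ≤ -(4 * (p - 2 * q - 2) ^ 2 / q) * s := by
  have hcq : c * q = 2 * (p - 2 * q - 2) := by rw [hc]; field_simp
  have hc_nonneg : 0 ≤ c := hc ▸ div_nonneg (by linarith) hq.le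
  have h_rhs : 4 * (p - 2 * q - 2) ^ 2 / q = 2 * c * (p - 2 * q - 2) := by
    rw [hc]; field_simp; ring
  calc -4 * c * (p - q - 2) * s + (c ^ 2 + 4 * c) * t ^ 2
      ≤ -4 * c * (p - q - 2) * s + (c ^ 2 + 4 * c) * (q * s) := by gcongr
    _ = -4 * c * (p - q - 2) * s + c * (c * q + 4 * q) * s := by ring
    _ = -(4 * (p - 2 * q - 2) ^ 2 / q) * s := by rw [hcq, h_rhs]; ring

/-- For `p ≥ 2q+3` and `c = 2(p-2q-2)/q`, the quantity
`-4c(p-q-2) tr((ZᵀZ)⁻²) + (c²+4c)(tr((ZᵀZ)⁻¹))²` is at most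
`-(4(p-2q-2)²/q) tr((ZᵀZ)⁻²)` and in particular is strictly negative. -/
theorem stmt_12 (p q : ℕ) (hq : 1 ≤ q) (hpq : 2 * q + 3 ≤ p) (c : ℝ)
    (hc : c = 2 * ((p : ℝ) - 2 * q - 2) / q)
    (Z : Matrix (Fin p) (Fin q) ℝ) (hZ : IsUnit (Zᵀ * Z).det) :
    (-4 * c * ((p : ℝ) - q - 2) * Matrix.trace (((Zᵀ * Z)⁻¹) ^ 2)
        + (c ^ 2 + 4 * c) * Matrix.trace ((Zᵀ * Z)⁻¹) ^ 2
      ≤ -(4 * ((p : ℝ) - 2 * q - 2) ^ 2 / q) * Matrix.trace (((Zᵀ * Z)⁻¹) ^ 2)) ∧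
    (-4 * c * ((p : ℝ) - q - 2) * Matrix.trace (((Zᵀ * Z)⁻¹) ^ 2)
        + (c ^ 2 + 4 * c) * Matrix.trace ((Zᵀ * Z)⁻¹) ^ 2 < 0) := by
  have : Nonempty (Fin q) := ⟨⟨0, hq⟩⟩
  set A := (Zᵀ * Z)⁻¹
  have hA_symm : A.IsSymm := by
    have hZZ : (Zᵀ * Z).IsSymm := by rw [IsSymm, transpose_mul, transpose_transpose]
    exact hZZ.inv
  have hA_ne : A ≠ 0 :=
    (isUnit_nonsing_inv_iff.mpr ((isUnit_iff_isUnit_det _).mpr hZ)).ne_zero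
  rw [hA_symm.sq_eq_transpose_mul_self]
  have hs : 0 < (Aᵀ * A).trace := trace_transpose_mul_self_pos hA_ne
  have hts : A.trace ^ 2 ≤ q * (Aᵀ * A).trace := by
    simpa using sq_trace_le_card_mul_trace_transpose_mul_self A
  have hq' : (0 : ℝ) < q := by exact_mod_cast hq
  have hpq' : 2 * (q : ℝ) + 3 ≤ p := by exact_mod_cast hpq
  have h_le := neg_four_mul_add_le_of_sq_le hq' (by linarith) hc hts
  have hd : (0 : ℝ) < p - 2 * q - 2 := by linarith
  have h_rhs_neg : -(4 * ((p : ℝ) - 2 * q - 2) ^ 2 / q) * (Aᵀ * A).trace < 0 :=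
    mul_neg_of_neg_of_pos (neg_neg_of_pos (by positivity)) hs
  exact ⟨h_le, h_le.trans_lt h_rhs_neg⟩
end
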